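/- arXiv:2507.01425 — 7 statements merged into one kernel-verified Lean document; each statement's English description precedes it below -/
import Mathlib

section
/- A rack is connected if and only if it is indecomposable. That is, for a rack (R,⊳), the inner automorphism group Inn(R) acts transitively on R if and only if R is nonempty and admits no decomposition into two disjoint nonempty subracks. -/
open Quandles

/-- A subrack of a rack `R`: a subset `S` with `ℓ_s(S) = S` for all `s ∈ S`. -/
def IsSubrack {R : Type*} [Rack R] (S : Set R) : Prop :=
  ∀ s ∈ S, (fun b => s ◃ b) '' S = S

/-- The inner automorphism group of a rack: the subgroup of permutations generated by
the left multiplications. -/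
def Inn (R : Type*) [Rack R] : Subgroup (Equiv.Perm R) :=
  Subgroup.closure (Set.range (Rack.act' : R → R ≃ R))

/-- A rack is connected if its inner automorphism group acts transitively on it,
i.e. there is exactly one orbit. -/
def IsConnectedRack (R : Type*) [Rack R] : Prop :=
  Nonempty R ∧ ∀ x y : R, ∃ g ∈ Inn R, g x = y

/-- A decomposition of a rack into two disjoint nonempty subracks. -/
structure IsDecomposition (R : Type*) [Rack R] (S T : Set R) : Prop where
  subrack_left : IsSubrack S
  subrack_right : IsSubrack T
  nonempty_left : S.Nonempty
  nonempty_right : T.Nonempty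
  disjoint : Disjoint S T
  union : S ∪ T = Set.univ

/-- Two shelves (racks, quandles) are isomorphic if there is a structure-preserving
bijection between them. -/
def RackIsomorphic (A B : Type*) [Shelf A] [Shelf B] : Prop :=
  ∃ e : A ≃ B, ∀ x y : A, e (x ◃ y) = e x ◃ e y

/-- The permutation rack on a set `R` given by a permutation `π`: `a ◃ b = π b`. -/
def permRack {R : Type*} (π : Equiv.Perm R) : Rack R where
  act _ b := π b
  self_distrib := rfl
  invAct _ b := π.symm b
  left_inv _ b := π.symm_apply_apply b
  right_inv _ b := π.apply_symm_apply b

/-- The product of two racks, with componentwise operation. -/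
instance prodRack {A B : Type*} [Rack A] [Rack B] : Rack (A × B) where
  act x y := (x.1 ◃ y.1, x.2 ◃ y.2)
  self_distrib := by
    intro x y z
    dsimp only
    rw [Shelf.self_distrib (x := x.1), Shelf.self_distrib (x := x.2)]
  invAct x y := (x.1 ◃⁻¹ y.1, x.2 ◃⁻¹ y.2)
  left_inv x y := by
    dsimp only
    rw [Rack.left_inv x.1 y.1, Rack.left_inv x.2 y.2]
  right_inv x y := by
    dsimp only
    rw [Rack.right_inv x.1 y.1, Rack.right_inv x.2 y.2]

/-- A subrack, with its induced rack structure. -/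
def Subrack.rack {R : Type*} [Rack R] (S : Set R) (hS : IsSubrack S) : Rack S where
  act x y := ⟨x.1 ◃ y.1, by
    have h := hS x.1 x.2
    exact (Set.ext_iff.mp h (x.1 ◃ y.1)).mp ⟨y.1, y.2, rfl⟩⟩
  self_distrib := by
    intro x y z
    exact Subtype.ext Shelf.self_distrib
  invAct x y := ⟨x.1 ◃⁻¹ y.1, by
    have h := hS x.1 x.2
    have hy : (y : R) ∈ (fun b => x.1 ◃ b) '' S := (Set.ext_iff.mp h y.1).mpr y.2
    obtain ⟨u, hu, hequ⟩ := hy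
    have : x.1 ◃⁻¹ (y : R) = u := by
      rw [← hequ]; exact Rack.left_inv x.1 u
    rw [this]; exact hu⟩
  left_inv x y := Subtype.ext (Rack.left_inv x.1 y.1)
  right_inv x y := Subtype.ext (Rack.right_inv x.1 y.1)

/-!
The Inn(R)-invariant subsets are exactly the subsets invariant under every left multiplication,
and a set `S` is such a subset iff both `S` and `Sᶜ` are subracks: a left multiplication by an
element of `Sᶜ` preserves `Sᶜ`, hence, being a bijection, also `S`. Decompositions are therefore
the splittings of `R` into two nonempty Inn(R)-invariant parts, which cannot exist when Inn(R)
is transitive; otherwise an orbit and its complement form one.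
-/

open MulAction Pointwise

section

variable {R : Type*} [Rack R] {S T : Set R}

theorem inn_le_stabilizer_iff :
    Inn R ≤ stabilizer (Equiv.Perm R) S ↔ ∀ a : R, (fun b => a ◃ b) '' S = S := by
  rw [Inn, Subgroup.closure_le, Set.range_subset_iff]
  rfl

theorem isSubrack_of_inn_le_stabilizer (h : Inn R ≤ stabilizer (Equiv.Perm R) S) :
    IsSubrack S :=
  fun s _ => inn_le_stabilizer_iff.1 h s

theorem isDecomposition_compl (h : Inn R ≤ stabilizer (Equiv.Perm R) S) (hS : S.Nonempty)
    (hSc : Sᶜ.Nonempty) : IsDecomposition R S Sᶜ where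
  subrack_left := isSubrack_of_inn_le_stabilizer h
  subrack_right := isSubrack_of_inn_le_stabilizer (h.trans (stabilizer_compl _ _).ge)
  nonempty_left := hS
  nonempty_right := hSc
  disjoint := disjoint_compl_right
  union := Set.union_compl_self S

theorem IsDecomposition.compl_left_eq (h : IsDecomposition R S T) : Sᶜ = T :=
  (isCompl_iff.2 ⟨h.disjoint, codisjoint_iff.2 h.union⟩).compl_eq

theorem IsDecomposition.inn_le_stabilizer_left (h : IsDecomposition R S T) :
    Inn R ≤ stabilizer (Equiv.Perm R) S := by
  refine inn_le_stabilizer_iff.2 fun a => ?_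
  rcases h.union.symm.subset (Set.mem_univ a) with ha | ha
  · exact h.subrack_left a ha
  · have ha' : Rack.act' a ∈ stabilizer (Equiv.Perm R) Sᶜ :=
      h.compl_left_eq ▸ h.subrack_right a ha
    rwa [stabilizer_compl] at ha'

theorem Subgroup.le_stabilizer_orbit {G α : Type*} [Group G] [MulAction G α] (H : Subgroup G)
    (x : α) : H ≤ stabilizer G (orbit H x) :=
  fun g hg => smul_orbit (⟨g, hg⟩ : H) x

theorem isPretransitive_inn_iff_not_exists_isDecomposition :
    IsPretransitive (Inn R) R ↔ ¬ ∃ S T : Set R, IsDecomposition R S T := by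
  constructor
  · rintro htrans ⟨S, T, h⟩
    obtain ⟨s, hs⟩ := h.nonempty_left
    obtain ⟨t, ht⟩ := h.nonempty_right
    obtain ⟨g, rfl⟩ := exists_smul_eq (Inn R) s t
    have hgs : g • s ∈ S := by
      rw [← h.inn_le_stabilizer_left g.2]
      exact Set.smul_mem_smul_set hs
    exact h.disjoint.notMem_of_mem_left hgs ht
  · refine fun hnd => ⟨fun x y => mem_orbit_iff.1 ?_⟩
    by_contra hy
    exact hnd ⟨_, _, isDecomposition_compl ((Inn R).le_stabilizer_orbit x)
      ⟨x, mem_orbit_self x⟩ ⟨y, hy⟩⟩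

end

/-- A rack is connected (its inner automorphism group acts transitively,
i.e. has a single orbit) if and only if it is indecomposable (nonempty and admitting no
decomposition into two disjoint nonempty subracks). -/
theorem connected_iff_indecomposable (R : Type*) [Rack R] :
    (Nonempty R ∧ ∀ x y : R, ∃ g ∈ Inn R, g x = y) ↔
      (Nonempty R ∧ ¬ ∃ S T : Set R, IsDecomposition R S T) := by
  rw [← isPretransitive_inn_iff_not_exists_isDecomposition, isPretransitive_iff]
  simp only [Subtype.exists, Subgroup.mk_smul, Equiv.Perm.smul_def, exists_prop]
end

section
/- Let R and S be finite connected racks, and let T be a finite rack containing an element t with t ⊳ t = t (for example, a nonempty quandle). If the product racks R × T and S × T are isomorphic, then R and S are isomorphic. -/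
open Quandles

/-!
Lovász's counting argument. For a finite shelf `X`, homomorphisms `X → R × T` are pairs of
homomorphisms, and there is at least one `X → T` (constant at the idempotent `t`); so the
isomorphism `R × T ≅ S × T` forces `#Hom(X, R) = #Hom(X, S)` for every finite `X`.
Sorting homomorphisms `X → A` by their kernel congruence `θ` gives
`#Hom(X, A) = #Inj(X, A) + ∑_{θ ≠ ⊥} #Inj(X/θ, A)`, and each `X/θ` with `θ ≠ ⊥` is smaller
than `X`, so by strong induction also `#Inj(X, R) = #Inj(X, S)`. Taking `X = R` and `X = S`
yields injective homomorphisms `R → S → R`, hence an isomorphism.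
-/

universe u v w

instance ShelfHom.finite {X A : Type*} [Shelf X] [Shelf A] [Finite X] [Finite A] :
    Finite (X →◃ A) :=
  Finite.of_injective _ DFunLike.coe_injective

instance ULift.shelf {X : Type u} [Shelf X] : Shelf (ULift.{v} X) where
  act a b := ⟨a.down ◃ b.down⟩
  self_distrib := congrArg ULift.up Shelf.self_distrib

structure ShelfCon (X : Type*) [Shelf X] extends Setoid X where
  act_congr : ∀ {a b c d}, r a b → r c d → r (a ◃ c) (b ◃ d)

namespace ShelfCon

variable {X : Type*} [Shelf X]

lemma toSetoid_injective : Function.Injective (toSetoid : ShelfCon X → Setoid X)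
  | ⟨_, _⟩, ⟨_, _⟩, rfl => rfl

instance [Finite X] : Finite (ShelfCon X) :=
  Finite.of_injective (fun c : ShelfCon X => ⇑c.toSetoid)
    fun _ _ h => toSetoid_injective (Setoid.ext fun a b => iff_of_eq (congrFun₂ h a b))

noncomputable instance [Finite X] : Fintype (ShelfCon X) := Fintype.ofFinite _

instance : Bot (ShelfCon X) :=
  ⟨{ toSetoid := ⊥, act_congr := fun hab hcd => by subst hab hcd; rfl }⟩

protected def Quotient (c : ShelfCon X) : Type _ := Quotient c.toSetoid

variable (c : ShelfCon X)

instance [Finite X] : Finite c.Quotient := inferInstanceAs (Finite (Quotient c.toSetoid))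

instance : Shelf c.Quotient where
  act := Quotient.map₂ (· ◃ ·) fun _ _ hab _ _ hcd => c.act_congr hab hcd
  self_distrib := by
    rintro ⟨x⟩ ⟨y⟩ ⟨z⟩
    exact congrArg (Quotient.mk _) Shelf.self_distrib

def mk' : X →◃ c.Quotient where
  toFun := Quotient.mk _
  map_act' := rfl

lemma mk'_surjective : Function.Surjective c.mk' := Quotient.mk_surjective

lemma mk'_eq_mk'_iff {a b : X} : c.mk' a = c.mk' b ↔ c.toSetoid a b := Quotient.eq

lemma card_quotient_lt [Finite X] (hc : c ≠ ⊥) : Nat.card c.Quotient < Nat.card X := by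
  obtain ⟨a, b, hab, hne⟩ : ∃ a b, c.toSetoid a b ∧ a ≠ b := by
    by_contra! h
    exact hc (toSetoid_injective (Setoid.ext fun a b => ⟨h a b, fun hab => hab ▸ c.refl' a⟩))
  refine (Nat.card_le_card_of_surjective _ c.mk'_surjective).lt_of_ne fun hcard => hne ?_
  exact ((Nat.bijective_iff_surjective_and_card c.mk').2 ⟨c.mk'_surjective, hcard.symm⟩).1
    ((c.mk'_eq_mk'_iff).2 hab)

end ShelfCon

namespace ShelfHom

variable {X A : Type*} [Shelf X] [Shelf A]

def ker (f : X →◃ A) : ShelfCon X where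
  toSetoid := Setoid.ker f
  act_congr hab hcd := by
    simp only [Setoid.ker_def, map_act] at hab hcd ⊢
    rw [hab, hcd]

lemma ker_eq_bot_iff (f : X →◃ A) : f.ker = ⊥ ↔ Function.Injective f := by
  rw [← Setoid.ker_eq_bot_iff, ← ShelfCon.toSetoid_injective.eq_iff]
  rfl

def kerEquiv (c : ShelfCon X) :
    {f : X →◃ A // f.ker = c} ≃ {g : c.Quotient →◃ A // Function.Injective g} where
  toFun f :=
    ⟨{ toFun := Quotient.lift f.1 fun a b hab => by rwa [← f.2] at hab
       map_act' := by rintro ⟨x⟩ ⟨y⟩; exact f.1.map_act },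
      by rintro ⟨x⟩ ⟨y⟩ h; exact Quotient.sound (f.2 ▸ h)⟩
  invFun g := ⟨g.1.comp c.mk', ShelfCon.toSetoid_injective <| Setoid.ext fun a b =>
    g.2.eq_iff.trans (c.mk'_eq_mk'_iff)⟩
  left_inv f := rfl
  right_inv g := by ext ⟨x⟩; rfl

end ShelfHom

section Lovasz

open scoped Classical

variable {A : Type u} {B : Type v} [Shelf A] [Shelf B]

lemma card_shelfHom_eq_card_injective_add_sum {X : Type*} [Shelf X] [Finite X] [Finite A] :
    Nat.card (X →◃ A) = Nat.card {f : X →◃ A // Function.Injective f} +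
      ∑ c ∈ Finset.univ.erase (⊥ : ShelfCon X),
        Nat.card {g : c.Quotient →◃ A // Function.Injective g} := by
  rw [← Nat.card_congr (Equiv.sigmaFiberEquiv ShelfHom.ker), Nat.card_sigma,
    ← Finset.add_sum_erase _ _ (Finset.mem_univ ⊥),
    Nat.card_congr (Equiv.subtypeEquivRight fun f => f.ker_eq_bot_iff)]
  simp only [Nat.card_congr (ShelfHom.kerEquiv _)]

lemma card_injective_shelfHom_eq_of_card_shelfHom_eq [Finite A] [Finite B]
    (h : ∀ (X : Type w) [Shelf X] [Finite X], Nat.card (X →◃ A) = Nat.card (X →◃ B))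
    (X : Type w) [Shelf X] [Finite X] :
    Nat.card {f : X →◃ A // Function.Injective f} =
      Nat.card {f : X →◃ B // Function.Injective f} := by
  induction hn : Nat.card X using Nat.strong_induction_on generalizing X with
  | _ n ih =>
    have hquot : ∀ c ∈ Finset.univ.erase (⊥ : ShelfCon X),
        Nat.card {g : c.Quotient →◃ A // Function.Injective g} =
          Nat.card {g : c.Quotient →◃ B // Function.Injective g} := fun c hc =>
      ih _ (hn ▸ c.card_quotient_lt (Finset.ne_of_mem_erase hc)) c.Quotient rfl
    have := h X
    rw [card_shelfHom_eq_card_injective_add_sum, card_shelfHom_eq_card_injective_add_sum,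
      Finset.sum_congr rfl hquot] at this
    exact Nat.add_right_cancel this

end Lovasz

lemma exists_injective_shelfHom_of_card_eq {A : Type u} {B : Type v} [Shelf A] [Shelf B]
    [Finite A]
    (h : Nat.card {f : ULift.{w} A →◃ A // Function.Injective f} =
      Nat.card {f : ULift.{w} A →◃ B // Function.Injective f}) :
    ∃ f : A →◃ B, Function.Injective f := by
  have : Nonempty {f : ULift.{w} A →◃ A // Function.Injective f} :=
    ⟨⟨⟨ULift.down, rfl⟩, ULift.down_injective⟩⟩
  obtain ⟨f, hf⟩ := (Nat.card_pos_iff.1 (h ▸ Nat.card_pos)).1.some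
  exact ⟨⟨fun a => f ⟨a⟩, f.map_act⟩, hf.comp ULift.up_injective⟩

theorem rackIsomorphic_of_card_shelfHom_eq {A : Type u} {B : Type v} [Shelf A] [Shelf B]
    [Finite A] [Finite B]
    (h : ∀ (X : Type (max u v)) [Shelf X] [Finite X], Nat.card (X →◃ A) = Nat.card (X →◃ B)) :
    RackIsomorphic A B := by
  obtain ⟨f, hf⟩ := exists_injective_shelfHom_of_card_eq
    (card_injective_shelfHom_eq_of_card_shelfHom_eq h _)
  obtain ⟨g, hg⟩ := exists_injective_shelfHom_of_card_eq
    (card_injective_shelfHom_eq_of_card_shelfHom_eq h _).symm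
  have hcard : Nat.card A = Nat.card B :=
    (Nat.card_le_card_of_injective f hf).antisymm (Nat.card_le_card_of_injective g hg)
  exact ⟨Equiv.ofBijective f ((Nat.bijective_iff_injective_and_card f).2 ⟨hf, hcard⟩),
    fun _ _ => f.map_act⟩

def ShelfHom.prodEquiv {X A B : Type*} [Shelf X] [Rack A] [Rack B] :
    (X →◃ A × B) ≃ (X →◃ A) × (X →◃ B) where
  toFun f := (⟨fun x => (f x).1, congrArg Prod.fst f.map_act⟩,
    ⟨fun x => (f x).2, congrArg Prod.snd f.map_act⟩)
  invFun p := ⟨fun x => (p.1 x, p.2 x), Prod.ext p.1.map_act p.2.map_act⟩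
  left_inv _ := rfl
  right_inv _ := rfl

def ShelfHom.compEquiv {X A B : Type*} [Shelf X] [Shelf A] [Shelf B] (e : A ≃ B)
    (he : ∀ x y, e (x ◃ y) = e x ◃ e y) : (X →◃ A) ≃ (X →◃ B) where
  toFun f := ⟨e ∘ f, by simp [he]⟩
  invFun f := ⟨e.symm ∘ f, fun {x y} => e.injective (by simp [he])⟩
  left_inv f := by ext x; exact e.symm_apply_apply (f x)
  right_inv f := by ext x; exact e.apply_symm_apply (f x)

theorem rack_cancellation_general {R S T : Type*} [Rack R] [Rack S] [Rack T]
    [Fintype R] [Fintype S] [Fintype T]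
    (t : T) (ht : t ◃ t = t)
    (h : RackIsomorphic (R × T) (S × T)) :
    RackIsomorphic R S := by
  obtain ⟨e, he⟩ := h
  refine rackIsomorphic_of_card_shelfHom_eq fun X _ _ => ?_
  have : Nonempty (X →◃ T) := ⟨⟨fun _ => t, ht.symm⟩⟩
  refine Nat.eq_of_mul_eq_mul_right (Nat.card_pos (α := X →◃ T)) ?_
  rw [← Nat.card_prod, ← Nat.card_prod, ← Nat.card_congr ShelfHom.prodEquiv,
    ← Nat.card_congr ShelfHom.prodEquiv]
  exact Nat.card_congr (ShelfHom.compEquiv e he)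

/-- Cancellation: if `R` and `S` are finite connected racks and `T` is a finite
rack containing an element `t` with `t ◃ t = t`, then `R × T ≅ S × T` implies `R ≅ S`. -/
theorem rack_cancellation {R S T : Type*} [Rack R] [Rack S] [Rack T]
    [Fintype R] [Fintype S] [Fintype T]
    (hR : IsConnectedRack R) (hS : IsConnectedRack S)
    (t : T) (ht : t ◃ t = t)
    (h : RackIsomorphic (R × T) (S × T)) :
    RackIsomorphic R S :=
  rack_cancellation_general t ht h
end

section
/- Let R be a finite rack admitting two decompositions R = S₁ ∪ T₁ and R = S₂ ∪ T₂, each into two disjoint nonempty subracks. If there is a rack isomorphism T₁ ≅ T₂ and the subracks S₁ and S₂ are connected, then there is a rack isomorphism S₁ ≅ S₂. -/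
open Quandles

/-!
A decomposition `R = S ⊔ T` is the same thing as a pair of complementary subsets invariant under
every `ℓ_a` and `ℓ_a⁻¹`; in particular a connected subrack lies inside one part of any
decomposition. So either `S₁ = S₂`, or `S₁ ⊆ T₂` and `S₂ ⊆ T₁`. In the second case
`T₂ = S₁ ⊔ (T₁ ∩ T₂)`, and transporting `T₁ = S₂ ⊔ (T₁ ∩ T₂)` along `φ : T₁ ≅ T₂` gives a second
decomposition of the smaller rack `T₂` with isomorphic second parts, so induction on `|R|` applies.
-/

universe u

section Invariant

variable {A B : Type*} [Rack A] [Rack B]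

def IsActInvariant (P : Set A) : Prop :=
  ∀ a x : A, a ◃ x ∈ P ↔ x ∈ P

namespace IsActInvariant

variable {P Q : Set A}

theorem compl (hP : IsActInvariant P) : IsActInvariant Pᶜ :=
  fun a x => not_congr (hP a x)

theorem inter (hP : IsActInvariant P) (hQ : IsActInvariant Q) : IsActInvariant (P ∩ Q) :=
  fun a x => and_congr (hP a x) (hQ a x)

theorem preimage {f : A → B} (hf : ∀ x y, f (x ◃ y) = f x ◃ f y) {P : Set B}
    (hP : IsActInvariant P) : IsActInvariant (f ⁻¹' P) := fun a x => by
  simp only [Set.mem_preimage, hf]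
  exact hP _ _

theorem isSubrack (hP : IsActInvariant P) : IsSubrack P := by
  intro s _
  ext y
  refine ⟨?_, fun hy => ⟨s ◃⁻¹ y, (hP s _).mp ?_, Rack.right_inv s y⟩⟩
  · rintro ⟨x, hx, rfl⟩
    exact (hP s x).mpr hx
  · rwa [Rack.right_inv]

theorem apply_mem_iff (hP : IsActInvariant P) {g : Equiv.Perm A} (hg : g ∈ Inn A) (x : A) :
    g x ∈ P ↔ x ∈ P := by
  induction hg using Subgroup.closure_induction generalizing x with
  | mem _ h => obtain ⟨a, rfl⟩ := h; exact hP a x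
  | one => rfl
  | mul g h _ _ hg hh => exact (hg (h x)).trans (hh x)
  | inv g _ hg => simpa using (hg (g⁻¹ x)).symm

end IsActInvariant

-- Registered through `Fact` so that complements, intersections and preimages of invariant subsets
-- receive their induced rack structure by instance search.
instance IsActInvariant.instRack {P : Set A} [hP : Fact (IsActInvariant P)] : Rack P :=
  Subrack.rack P hP.out.isSubrack

instance IsActInvariant.fact_compl {P : Set A} [hP : Fact (IsActInvariant P)] :
    Fact (IsActInvariant Pᶜ) :=
  ⟨hP.out.compl⟩

instance IsActInvariant.fact_inter {P Q : Set A} [hP : Fact (IsActInvariant P)]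
    [hQ : Fact (IsActInvariant Q)] : Fact (IsActInvariant (P ∩ Q)) :=
  ⟨hP.out.inter hQ.out⟩

instance IsActInvariant.fact_preimage_val {X P : Set A} [Fact (IsActInvariant X)]
    [hP : Fact (IsActInvariant P)] : Fact (IsActInvariant (Subtype.val ⁻¹' P : Set X)) :=
  ⟨hP.out.preimage fun _ _ => rfl⟩

end Invariant

theorem IsSubrack.act_mem_iff {R : Type*} [Rack R] {S : Set R} (hS : IsSubrack S) {a : R}
    (ha : a ∈ S) (x : R) : a ◃ x ∈ S ↔ x ∈ S := by
  calc a ◃ x ∈ S ↔ a ◃ x ∈ (a ◃ ·) '' S := by rw [hS a ha]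
    _ ↔ x ∈ S := Function.Injective.mem_set_image fun _ _ => (Rack.left_cancel a).mp

namespace IsDecomposition

variable {R : Type*} [Rack R] {S T : Set R}

theorem isCompl (h : IsDecomposition R S T) : IsCompl S T :=
  ⟨h.disjoint, codisjoint_iff.mpr h.union⟩

theorem isActInvariant_left (h : IsDecomposition R S T) : IsActInvariant S := by
  intro a x
  rcases h.union.symm ▸ Set.mem_univ a with ha | ha
  · exact h.subrack_left.act_mem_iff ha x
  · rw [h.isCompl.eq_compl]
    exact not_congr (h.subrack_right.act_mem_iff ha x)

end IsDecomposition

section Connected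

variable {A B : Type*} [Rack A] [Rack B]

theorem isConnectedRack_iff :
    IsConnectedRack A ↔ Nonempty A ∧ ∀ P : Set A, IsActInvariant P → P.Nonempty → P = .univ := by
  refine ⟨fun ⟨hne, htrans⟩ => ⟨hne, fun P hP ⟨x, hx⟩ => ?_⟩, fun ⟨hne, hmin⟩ => ⟨hne, ?_⟩⟩
  · refine Set.eq_univ_of_forall fun y => ?_
    obtain ⟨g, hg, rfl⟩ := htrans x y
    exact (hP.apply_mem_iff hg x).mpr hx
  · intro x y
    have horbit : IsActInvariant {y | ∃ g ∈ Inn A, g x = y} := by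
      intro a y
      refine ⟨fun ⟨g, hg, hgy⟩ => ⟨(Rack.act' a)⁻¹ * g, ?_, ?_⟩,
        fun ⟨g, hg, hgy⟩ => ⟨Rack.act' a * g, ?_, ?_⟩⟩
      · exact mul_mem (inv_mem (Subgroup.subset_closure ⟨a, rfl⟩)) hg
      · simp [hgy]
      · exact mul_mem (Subgroup.subset_closure ⟨a, rfl⟩) hg
      · simp [hgy]
    exact Set.eq_univ_iff_forall.mp (hmin _ horbit ⟨x, 1, one_mem _, rfl⟩) y

theorem IsConnectedRack.of_rackIsomorphic (h : RackIsomorphic A B) (hA : IsConnectedRack A) :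
    IsConnectedRack B := by
  obtain ⟨e, he⟩ := h
  obtain ⟨hne, hmin⟩ := isConnectedRack_iff.mp hA
  refine isConnectedRack_iff.mpr ⟨hne.map e, fun P hP ⟨y, hy⟩ => ?_⟩
  have := hmin _ (hP.preimage he) ⟨e.symm y, by simpa using hy⟩
  rwa [Set.preimage_eq_univ_iff, e.range_eq_univ, Set.univ_subset_iff] at this

theorem IsConnectedRack.subset_or_disjoint {S : Set A} [Fact (IsActInvariant S)]
    (hS : IsConnectedRack S) {P : Set A} (hP : IsActInvariant P) : S ⊆ P ∨ Disjoint S P := by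
  by_cases hmeet : (Subtype.val ⁻¹' P : Set S).Nonempty
  · have := (isConnectedRack_iff.mp hS).2 _ (hP.preimage fun _ _ => rfl) hmeet
    exact .inl fun x hx => (Set.eq_univ_iff_forall.mp this ⟨x, hx⟩ :)
  · exact .inr (Set.disjoint_left.mpr fun x hx hxP => hmeet ⟨⟨x, hx⟩, hxP⟩)

end Connected

namespace RackIsomorphic

theorem symm {A B : Type*} [Shelf A] [Shelf B] (h : RackIsomorphic A B) : RackIsomorphic B A := by
  obtain ⟨e, he⟩ := h
  exact ⟨e.symm, fun x y => e.injective (by simp [he])⟩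

theorem trans {A B C : Type*} [Shelf A] [Shelf B] [Shelf C] (h₁ : RackIsomorphic A B)
    (h₂ : RackIsomorphic B C) : RackIsomorphic A C := by
  obtain ⟨e, he⟩ := h₁
  obtain ⟨f, hf⟩ := h₂
  exact ⟨e.trans f, fun x y => by simp [he, hf]⟩

variable {A B : Type*} [Rack A] [Rack B]

theorem of_injective_image {f : A → B} (hf : Function.Injective f)
    (hmap : ∀ x y, f (x ◃ y) = f x ◃ f y) {P : Set A} {Q : Set B} [Fact (IsActInvariant P)]
    [Fact (IsActInvariant Q)] (hPQ : f '' P = Q) : RackIsomorphic P Q := by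
  subst hPQ
  exact ⟨Equiv.Set.image f P hf, fun x y => Subtype.ext (hmap x y)⟩

theorem preimage_val {X P Q : Set A} [Fact (IsActInvariant X)] [Fact (IsActInvariant P)]
    [Fact (IsActInvariant Q)] (h : X ∩ P = Q) :
    RackIsomorphic (Subtype.val ⁻¹' P : Set X) Q :=
  of_injective_image Subtype.val_injective (fun _ _ => rfl) (by rw [Subtype.image_preimage_coe, h])

theorem of_eq {S S' : Set A} [Fact (IsActInvariant S)] [Fact (IsActInvariant S')] (h : S = S') :
    RackIsomorphic S S' :=
  of_injective_image (f := id) Function.injective_id (fun _ _ => rfl) (by rw [Set.image_id, h])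

end RackIsomorphic

theorem rackIsomorphic_of_rackIsomorphic_compl {R : Type u} [Rack R] [Finite R] {S₁ S₂ : Set R}
    [Fact (IsActInvariant S₁)] [hS₂inv : Fact (IsActInvariant S₂)]
    (hS₁ : IsConnectedRack S₁) (hS₂ : IsConnectedRack S₂) (hT : RackIsomorphic ↥S₁ᶜ ↥S₂ᶜ) :
    RackIsomorphic S₁ S₂ := by
  induction hn : Nat.card R using Nat.strong_induction_on generalizing R with
  | _ n ih =>
  have hne₁ : S₁.Nonempty := Set.nonempty_coe_sort.mp hS₁.1
  have hne₂ : S₂.Nonempty := Set.nonempty_coe_sort.mp hS₂.1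
  rcases hS₁.subset_or_disjoint hS₂inv.out with h₁₂ | hdisj
  · have h₂₁ : S₂ ⊆ S₁ := (hS₂.subset_or_disjoint Fact.out).resolve_right fun h =>
      hne₁.ne_empty (disjoint_self.mp (h.symm.mono_right h₁₂))
    exact .of_eq (h₁₂.antisymm h₂₁)
  -- Inside `S₂ᶜ`: `A ≅ S₁`, `C ≅ S₂`, and both complements are `≅ S₁ᶜ ∩ S₂ᶜ`.
  obtain ⟨ψ, hψ⟩ := hT.symm
  let A : Set ↥S₂ᶜ := Subtype.val ⁻¹' S₁
  let C : Set ↥S₂ᶜ := ψ ⁻¹' (Subtype.val ⁻¹' S₂)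
  have : Fact (IsActInvariant C) := ⟨(Fact.out : IsActInvariant _).preimage hψ⟩
  have hA : RackIsomorphic A S₁ :=
    .preimage_val (Set.inter_eq_right.mpr (Set.subset_compl_iff_disjoint_right.mpr hdisj))
  have hC : RackIsomorphic C S₂ :=
    (RackIsomorphic.of_injective_image ψ.injective hψ (Set.image_preimage_eq _ ψ.surjective)).trans
      (.preimage_val (Set.inter_eq_right.mpr (Set.subset_compl_iff_disjoint_left.mpr hdisj)))
  have hAC : RackIsomorphic ↥Aᶜ ↥Cᶜ :=
    (RackIsomorphic.preimage_val (Set.inter_comm _ _)).trans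
      ((RackIsomorphic.of_injective_image (P := Cᶜ) ψ.injective hψ
        (Set.image_preimage_eq (Subtype.val ⁻¹' S₂ᶜ) ψ.surjective)).trans (.preimage_val rfl)).symm
  have hcard : Nat.card ↥S₂ᶜ < n := hn ▸ Finite.card_subtype_lt (not_not.mpr hne₂.some_mem)
  exact hA.symm.trans ((ih _ hcard (hS₁.of_rackIsomorphic hA.symm) (hS₂.of_rackIsomorphic hC.symm)
    hAC rfl).trans hC)

/-- If a finite rack has two decompositions `R = S₁ ∪ T₁ = S₂ ∪ T₂` into
disjoint nonempty subracks, `T₁ ≅ T₂`, and `S₁`, `S₂` are connected, then `S₁ ≅ S₂`. -/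
theorem decomposition_cancellation {R : Type*} [Rack R] [Fintype R]
    {S₁ T₁ S₂ T₂ : Set R}
    (h₁ : IsDecomposition R S₁ T₁) (h₂ : IsDecomposition R S₂ T₂)
    (hT : @RackIsomorphic ↥T₁ ↥T₂ (Subrack.rack T₁ h₁.subrack_right).toShelf
      (Subrack.rack T₂ h₂.subrack_right).toShelf)
    (hS₁ : @IsConnectedRack ↥S₁ (Subrack.rack S₁ h₁.subrack_left))
    (hS₂ : @IsConnectedRack ↥S₂ (Subrack.rack S₂ h₂.subrack_left)) :
    @RackIsomorphic ↥S₁ ↥S₂ (Subrack.rack S₁ h₁.subrack_left).toShelf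
      (Subrack.rack S₂ h₂.subrack_left).toShelf := by
  obtain rfl := h₁.isCompl.compl_eq
  obtain rfl := h₂.isCompl.compl_eq
  have : Fact (IsActInvariant S₁) := ⟨h₁.isActInvariant_left⟩
  have : Fact (IsActInvariant S₂) := ⟨h₂.isActInvariant_left⟩
  exact rackIsomorphic_of_rackIsomorphic_compl hS₁ hS₂ hT
end

section
/- Let C and C' be finite connected permutation racks (i.e., permutation racks whose permutation is a full cycle on a nonempty finite set), and let Q and Q' be finite connected quandles. If the product racks C × Q and C' × Q' are isomorphic, then C ≅ C' and Q ≅ Q'. -/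
/-!
Because `Q` and `Q'` are quandles, `p ◃ p = (π p.1, p.2)` in `C × Q`, so a rack isomorphism
`e : C × Q ≃ C' × Q'` intertwines `π × id` with `π' × id`. Transitivity of `π` then makes the
`Q'`-coordinate of `e (a, x)` independent of `a`, so `x ↦ (e (c₀, x)).2` is a quandle
homomorphism `Q → Q'` and `a ↦ (e (a, x₀)).1` is a rack homomorphism `C → C'`; both are
bijective because `π` and `π'` are transitive.
-/

open Quandles

open Equiv Function

theorem Function.Semiconj.zpow_perm {α β : Type*} {u : α → β} {π : Perm α} {π' : Perm β}
    (h : Semiconj u π π') (k : ℤ) : Semiconj u ⇑(π ^ k) ⇑(π' ^ k) := by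
  induction k using Int.induction_on with
  | zero => exact Semiconj.id_right
  | succ k ih =>
    simp only [zpow_add_one, Perm.coe_mul]
    exact ih.comp_right h
  | pred k ih =>
    have h_inv : Semiconj u ⇑π⁻¹ ⇑π'⁻¹ := h.inverses_right π.right_inv π'.left_inv
    simp only [zpow_sub_one, Perm.coe_mul]
    exact ih.comp_right h_inv

theorem Prod.act_self {R Q : Type*} [Rack R] [Quandle Q] (p : R × Q) :
    p ◃ p = (p.1 ◃ p.1, p.2) :=
  Prod.ext rfl (Quandle.fix (x := p.2))

theorem semiconj_prodMap_self_act_of_hom {R R' Q Q' : Type*} [Rack R] [Rack R'] [Quandle Q]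
    [Quandle Q'] {e : R × Q → R' × Q'} (he : ∀ p q, e (p ◃ q) = e p ◃ e q) :
    Semiconj e (Prod.map (fun a => a ◃ a) id) (Prod.map (fun a => a ◃ a) id) := fun p => by
  have h := he p p
  rwa [Prod.act_self, Prod.act_self] at h

theorem inn_permRack_le_zpowers {C : Type*} (π : Perm C) :
    @Inn C (permRack π) ≤ Subgroup.zpowers π :=
  (Subgroup.closure_le _).mpr (by rintro _ ⟨a, rfl⟩; exact Subgroup.mem_zpowers π)

theorem IsConnectedRack.sameCycle_of_permRack {C : Type*} {π : Perm C}
    (h : @IsConnectedRack C (permRack π)) (x y : C) : π.SameCycle x y := by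
  obtain ⟨g, hg, rfl⟩ := h.2 x y
  obtain ⟨k, rfl⟩ := Subgroup.mem_zpowers_iff.mp (inn_permRack_le_zpowers π hg)
  exact ⟨k, rfl⟩

section SemiconjProdMap

variable {C C' Q Q' : Type*} {π : Perm C} {π' : Perm C'} {e : C × Q ≃ C' × Q'}

theorem apply_zpow_mk_of_semiconj (he : Semiconj e (Prod.map π id) (Prod.map π' id)) (k : ℤ)
    (a : C) (x : Q) : e ((π ^ k) a, x) = ((π' ^ k) (e (a, x)).1, (e (a, x)).2) := by
  have h_fst : Semiconj (fun a => (e (a, x)).1) π π' := fun a => (Prod.ext_iff.mp (he (a, x))).1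
  have h_snd : Semiconj (fun a => (e (a, x)).2) π (1 : Perm Q') :=
    fun a => (Prod.ext_iff.mp (he (a, x))).2
  have h_snd_zpow := h_snd.zpow_perm k a
  rw [one_zpow] at h_snd_zpow
  exact Prod.ext (h_fst.zpow_perm k a) h_snd_zpow

theorem snd_apply_mk_eq_of_sameCycle (he : Semiconj e (Prod.map π id) (Prod.map π' id))
    {a b : C} (hab : π.SameCycle a b) (x : Q) : (e (b, x)).2 = (e (a, x)).2 := by
  obtain ⟨k, rfl⟩ := hab
  rw [apply_zpow_mk_of_semiconj he]

theorem bijective_fst_apply_mk_of_semiconj [Nonempty C]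
    (he : Semiconj e (Prod.map π id) (Prod.map π' id))
    (hπ : ∀ a b, π.SameCycle a b) (hπ' : ∀ a b, π'.SameCycle a b) (x : Q) :
    Bijective fun a => (e (a, x)).1 := by
  refine ⟨fun a b hab => ?_, fun c' => ?_⟩
  · have h_snd := snd_apply_mk_eq_of_sameCycle he (hπ a b) x
    exact (Prod.ext_iff.mp (e.injective (Prod.ext hab h_snd.symm))).1
  · obtain ⟨a₀⟩ := ‹Nonempty C›
    obtain ⟨k, hk⟩ := hπ' (e (a₀, x)).1 c'
    exact ⟨(π ^ k) a₀, by simp only [apply_zpow_mk_of_semiconj he, hk]⟩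

theorem bijective_snd_apply_mk_of_semiconj [Nonempty C']
    (he : Semiconj e (Prod.map π id) (Prod.map π' id))
    (hπ : ∀ a b, π.SameCycle a b) (hπ' : ∀ a b, π'.SameCycle a b) (a : C) :
    Bijective fun x => (e (a, x)).2 := by
  refine ⟨fun x y hxy => ?_, fun y' => ?_⟩
  · obtain ⟨k, hk⟩ := hπ' (e (a, x)).1 (e (a, y)).1
    have h_eq : e ((π ^ k) a, x) = e (a, y) := by
      rw [apply_zpow_mk_of_semiconj he, hk]
      exact Prod.ext rfl hxy
    exact (Prod.ext_iff.mp (e.injective h_eq)).2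
  · obtain ⟨c'⟩ := ‹Nonempty C'›
    refine ⟨(e.symm (c', y')).2, ?_⟩
    show (e (a, _)).2 = y'
    rw [snd_apply_mk_eq_of_sameCycle he (hπ (e.symm (c', y')).1 a), Prod.mk.eta,
      e.apply_symm_apply]

end SemiconjProdMap

theorem cycle_times_quandle_cancellation_general {C C' Q Q' : Type*}
    (π : Equiv.Perm C) (π' : Equiv.Perm C')
    [Quandle Q] [Quandle Q']
    (hC : @IsConnectedRack C (permRack π)) (hC' : @IsConnectedRack C' (permRack π'))
    (hQ : IsConnectedRack Q)
    (h : @RackIsomorphic (C × Q) (C' × Q')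
      (@prodRack C Q (permRack π) _).toShelf (@prodRack C' Q' (permRack π') _).toShelf) :
    @RackIsomorphic C C' (permRack π).toShelf (permRack π').toShelf ∧
      RackIsomorphic Q Q' := by
  let _ := permRack π
  let _ := permRack π'
  obtain ⟨e, he⟩ := h
  have hsc : Semiconj e (Prod.map π id) (Prod.map π' id) := semiconj_prodMap_self_act_of_hom he
  have hπ := hC.sameCycle_of_permRack
  have hπ' := hC'.sameCycle_of_permRack
  have _ := hC.1
  have _ := hC'.1
  obtain ⟨c₀⟩ := hC.1
  obtain ⟨x₀⟩ := hQ.1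
  refine ⟨⟨.ofBijective _ (bijective_fst_apply_mk_of_semiconj hsc hπ hπ' x₀),
    fun _ b => (Prod.ext_iff.mp (hsc (b, x₀))).1⟩,
    ⟨.ofBijective _ (bijective_snd_apply_mk_of_semiconj hsc hπ hπ' c₀), fun x y => ?_⟩⟩
  calc (e (c₀, x ◃ y)).2 = (e (π c₀, x ◃ y)).2 := (Prod.ext_iff.mp (hsc (c₀, x ◃ y))).2.symm
    _ = (e ((c₀, x) ◃ (c₀, y))).2 := rfl
    _ = (e (c₀, x)).2 ◃ (e (c₀, y)).2 := congrArg Prod.snd (he _ _)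

/-- If `C`, `C'` are finite connected permutation racks and `Q`, `Q'` are finite
connected quandles with `C × Q ≅ C' × Q'`, then `C ≅ C'` and `Q ≅ Q'`. -/
theorem cycle_times_quandle_cancellation {C C' Q Q' : Type*}
    [Fintype C] [Fintype C'] [Fintype Q] [Fintype Q']
    (π : Equiv.Perm C) (π' : Equiv.Perm C')
    [Quandle Q] [Quandle Q']
    (hC : @IsConnectedRack C (permRack π)) (hC' : @IsConnectedRack C' (permRack π'))
    (hQ : IsConnectedRack Q) (hQ' : IsConnectedRack Q')
    (h : @RackIsomorphic (C × Q) (C' × Q')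
      (@prodRack C Q (permRack π) _).toShelf (@prodRack C' Q' (permRack π') _).toShelf) :
    @RackIsomorphic C C' (permRack π).toShelf (permRack π').toShelf ∧
      RackIsomorphic Q Q' :=
  cycle_times_quandle_cancellation_general π π' hC hC' hQ h
end

section
/- Let C be a finitely generated connected rack. Then: (i) for every finite rack R, the set Mor(C, R) of rack morphisms C → R is finite; (ii) if a finite rack R is decomposed into two disjoint nonempty subracks S and T, then |Mor(C, R)| = |Mor(C, S)| + |Mor(C, T)|; (iii) for finite racks R and R', |Mor(C, R × R')| = |Mor(C, R)| · |Mor(C, R')|, where R × R' is the product rack with componentwise operation. -/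
open Quandles

/-- A rack is finitely generated if it has a finite subset contained in no proper subrack:
every subset containing it and closed under the operations `◃` and `◃⁻¹` is everything. -/
def RackFG (C : Type*) [Rack C] : Prop :=
  ∃ B : Finset C, ∀ X : Set C, ↑B ⊆ X →
    (∀ a ∈ X, ∀ b ∈ X, a ◃ b ∈ X ∧ a ◃⁻¹ b ∈ X) → X = Set.univ

/-
A morphism out of `C` is determined by its values on a finite generating set `B`, since the
points where two morphisms agree form a subset closed under `◃` and `◃⁻¹`; so `Mor(C, R)` embeds
into `R ^ B`. For a decomposition `R = S ⊔ T`, every `ℓ_r` maps `S` onto `S` and `T` onto `T`,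
so the preimage of `S` under a morphism `f` is invariant under `Inn(C)`; by connectedness it is
empty or everything, i.e. `f` lands entirely in `S` or entirely in `T`. Products are immediate
from the universal property of `R × R'`.
-/

universe u

open Set

theorem ShelfHom.map_invAct {C R : Type*} [Rack C] [Rack R] (f : C →◃ R) (a b : C) :
    f (a ◃⁻¹ b) = f a ◃⁻¹ f b := by
  rw [← Rack.left_cancel (f a), ← ShelfHom.map_act, Rack.right_inv, Rack.right_inv]

theorem ShelfHom.ext_of_eqOn_generators {C R : Type*} [Rack C] [Rack R] {B : Set C}
    (hB : ∀ X : Set C, B ⊆ X → (∀ a ∈ X, ∀ b ∈ X, a ◃ b ∈ X ∧ a ◃⁻¹ b ∈ X) → X = univ)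
    {f g : C →◃ R} (h : EqOn f g B) : f = g := by
  have hall := hB {x | f x = g x} h fun a (ha : f a = g a) b (hb : f b = g b) =>
    ⟨show f (a ◃ b) = g (a ◃ b) by rw [f.map_act, g.map_act, ha, hb],
      show f (a ◃⁻¹ b) = g (a ◃⁻¹ b) by rw [f.map_invAct, g.map_invAct, ha, hb]⟩
  exact DFunLike.ext f g fun x => (eq_univ_iff_forall.mp hall x : f x = g x)

theorem RackFG.finite_shelfHom {C R : Type*} [Rack C] [Rack R] [Finite R] (hfg : RackFG C) :
    Finite (C →◃ R) := by
  obtain ⟨B, hB⟩ := hfg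
  refine Finite.of_injective (fun (f : C →◃ R) (b : B) => f b) fun f g hfg => ?_
  exact ShelfHom.ext_of_eqOn_generators hB fun b hb => congrFun hfg ⟨b, hb⟩

theorem IsConnectedRack.eq_empty_or_eq_univ {C : Type*} [Rack C] (hC : IsConnectedRack C)
    {X : Set C} (hX : ∀ a x, a ◃ x ∈ X ↔ x ∈ X) : X = ∅ ∨ X = univ := by
  have hInn : ∀ g ∈ Inn C, ∀ z, g z ∈ X ↔ z ∈ X := by
    intro g hg
    induction hg using Subgroup.closure_induction with
    | mem _ hσ =>
      obtain ⟨a, rfl⟩ := hσ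
      exact hX a
    | one => exact fun _ => Iff.rfl
    | mul σ τ _ _ hσ hτ => exact fun z => (hσ (τ z)).trans (hτ z)
    | inv σ _ hσ => exact fun z => by simpa using (hσ (σ⁻¹ z)).symm
  refine X.eq_empty_or_nonempty.imp id fun ⟨x, hx⟩ => eq_univ_of_forall fun y => ?_
  obtain ⟨g, hg, rfl⟩ := hC.2 x y
  exact (hInn g hg x).mpr hx

namespace IsDecomposition

variable {R : Type*} [Rack R] {S T : Set R}

theorem symm (hd : IsDecomposition R S T) : IsDecomposition R T S :=
  ⟨hd.subrack_right, hd.subrack_left, hd.nonempty_right, hd.nonempty_left,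
    hd.disjoint.symm, by rw [union_comm, hd.union]⟩

theorem mem_right_of_notMem_left (hd : IsDecomposition R S T) {x : R} (hx : x ∉ S) : x ∈ T :=
  ((hd.union ▸ mem_univ x : x ∈ S ∪ T)).resolve_left hx

theorem act_mem_left (hd : IsDecomposition R S T) (r : R) {x : R} (hx : x ∈ S) : r ◃ x ∈ S := by
  by_cases hr : r ∈ S
  · rw [← hd.subrack_left r hr]
    exact mem_image_of_mem _ hx
  by_contra hrx
  obtain ⟨y, hy, hyx⟩ : r ◃ x ∈ (r ◃ ·) '' T := by
    rw [hd.subrack_right r (hd.mem_right_of_notMem_left hr)]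
    exact hd.mem_right_of_notMem_left hrx
  rw [Rack.left_cancel] at hyx
  exact disjoint_left.mp hd.disjoint hx (hyx ▸ hy)

theorem act_mem_left_iff (hd : IsDecomposition R S T) (r x : R) : r ◃ x ∈ S ↔ x ∈ S :=
  ⟨fun h => by_contra fun hx => disjoint_right.mp hd.disjoint
    (hd.symm.act_mem_left r (hd.mem_right_of_notMem_left hx)) h, hd.act_mem_left r⟩

theorem forall_mem_right_iff_not_forall_mem_left {C : Type*} [Rack C]
    (hd : IsDecomposition R S T) (hC : IsConnectedRack C) (f : C →◃ R) :
    (∀ x, f x ∈ T) ↔ ¬∀ x, f x ∈ S := by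
  obtain ⟨x₀⟩ := hC.1
  refine ⟨fun hT hS => disjoint_left.mp hd.disjoint (hS x₀) (hT x₀), fun hS x => ?_⟩
  have hpre : f ⁻¹' S = ∅ ∨ f ⁻¹' S = univ :=
    hC.eq_empty_or_eq_univ fun a y => by
      simp only [mem_preimage, ShelfHom.map_act, hd.act_mem_left_iff]
  rcases hpre with hempty | huniv
  · exact hd.mem_right_of_notMem_left (eq_empty_iff_forall_notMem.mp hempty x)
  · exact absurd (fun y => (eq_univ_iff_forall.mp huniv y : f y ∈ S)) hS

end IsDecomposition

def shelfHomSubrackEquiv {C R : Type*} [Shelf C] [Rack R] (S : Set R) (hS : IsSubrack S) :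
    @ShelfHom C S _ (Subrack.rack S hS).toShelf ≃ {f : C →◃ R // ∀ x, f x ∈ S} :=
  letI := Subrack.rack S hS
  { toFun g := ⟨⟨fun x => g x, congrArg Subtype.val g.map_act⟩, fun x => (g x).2⟩
    invFun f := ⟨fun x => ⟨f.1 x, f.2 x⟩, Subtype.ext f.1.map_act⟩
    left_inv _ := rfl
    right_inv _ := rfl }

def shelfHomProdEquiv {C R R' : Type*} [Shelf C] [Rack R] [Rack R'] :
    (C →◃ R × R') ≃ (C →◃ R) × (C →◃ R') where
  toFun f := (⟨fun x => (f x).1, congrArg Prod.fst f.map_act⟩,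
    ⟨fun x => (f x).2, congrArg Prod.snd f.map_act⟩)
  invFun g := ⟨fun x => (g.1 x, g.2 x), Prod.ext g.1.map_act g.2.map_act⟩
  left_inv _ := rfl
  right_inv _ := rfl

/-- For a finitely generated connected rack `C`: (i) `Mor(C, R)` is finite for
every finite rack `R`; (ii) `|Mor(C, R)| = |Mor(C, S)| + |Mor(C, T)|` for any decomposition of a
finite rack `R` into subracks `S` and `T`; (iii) `|Mor(C, R × R')| = |Mor(C, R)| ⬝ |Mor(C, R')|`. -/
theorem marks_are_additive_invariants {C : Type u} [Rack C]
    (hfg : RackFG C) (hC : IsConnectedRack C) :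
    (∀ (R : Type u) [Rack R] [Fintype R], Finite (C →◃ R)) ∧
    (∀ (R : Type u) [Rack R] [Fintype R] (S T : Set R) (hd : IsDecomposition R S T),
      Nat.card (C →◃ R) =
        Nat.card (@ShelfHom C ↥S _ (Subrack.rack S hd.subrack_left).toShelf) +
        Nat.card (@ShelfHom C ↥T _ (Subrack.rack T hd.subrack_right).toShelf)) ∧
    (∀ (R R' : Type u) [Rack R] [Rack R'] [Fintype R] [Fintype R'],
      Nat.card (C →◃ (R × R')) = Nat.card (C →◃ R) * Nat.card (C →◃ R')) := by
  classical
  refine ⟨fun R _ _ => hfg.finite_shelfHom, fun R _ _ S T hd => ?_, fun R R' _ _ _ _ => ?_⟩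
  · have : Finite (C →◃ R) := hfg.finite_shelfHom
    let split : (C →◃ R) ≃ {f : C →◃ R // ∀ x, f x ∈ S} ⊕ {f : C →◃ R // ∀ x, f x ∈ T} :=
      (Equiv.sumCompl fun f : C →◃ R => ∀ x, f x ∈ S).symm.trans <| Equiv.sumCongr (Equiv.refl _)
        (Equiv.subtypeEquivRight fun f =>
          (hd.forall_mem_right_iff_not_forall_mem_left hC f).symm)
    rw [Nat.card_congr split, Nat.card_sum, Nat.card_congr (shelfHomSubrackEquiv S _),
      Nat.card_congr (shelfHomSubrackEquiv T _)]
  · rw [Nat.card_congr shelfHomProdEquiv, Nat.card_prod]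
end

section
/- Let C and R be finite racks and let D be a finite rack. Write Mor^D(C, R) for the set of rack morphisms C → R whose image (a subrack of R) is isomorphic to D, Inj(D, R) for the set of injective rack morphisms D → R, Sur(C, D) for the set of surjective rack morphisms C → D, and Aut(D) for the group of rack automorphisms of D. Then |Mor^D(C, R)| · |Aut(D)| = |Inj(D, R)| · |Sur(C, D)|. -/
open Quandles

/-- The image of a rack morphism, with its induced shelf structure. -/
def rangeShelf {C R : Type*} [Rack C] [Rack R] (f : C →◃ R) : Shelf (Set.range ⇑f) where
  act x y := ⟨x.1 ◃ y.1, by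
    obtain ⟨a, ha⟩ := x.2
    obtain ⟨b, hb⟩ := y.2
    exact ⟨a ◃ b, by rw [f.map_act, ha, hb]⟩⟩
  self_distrib := by
    intro x y z
    exact Subtype.ext Shelf.self_distrib

universe u

/-! The composite of an injective `i : D → R` and a surjective `s : C → D` has image isomorphic
to `D`; conversely, a morphism `f : C → R` factors as `C → range f ≅ D → R` through any rack
isomorphism `range f ≅ D`, and these are all its factorizations. So the factorizations of each
`f ∈ Mor^D(C, R)` form a torsor under `Aut(D)`, and `Inj(D, R) × Sur(C, D)`, partitioned by the
composite, is in bijection with `Mor^D(C, R) × Aut(D)`. -/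

attribute [local instance] rangeShelf

def ShelfEquiv (A B : Type*) [Shelf A] [Shelf B] : Type _ :=
  {e : A ≃ B // ∀ x y : A, e (x ◃ y) = e x ◃ e y}

theorem rackIsomorphic_iff_nonempty_shelfEquiv {A B : Type*} [Shelf A] [Shelf B] :
    RackIsomorphic A B ↔ Nonempty (ShelfEquiv A B) :=
  ⟨fun ⟨e, he⟩ => ⟨⟨e, he⟩⟩, fun ⟨e⟩ => ⟨e.1, e.2⟩⟩

namespace ShelfEquiv

variable {A B E : Type*} [Shelf A] [Shelf B] [Shelf E]

@[ext]
theorem ext {e e' : ShelfEquiv A B} (h : ∀ x, e.1 x = e'.1 x) : e = e' :=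
  Subtype.ext (Equiv.ext h)

def symm (e : ShelfEquiv A B) : ShelfEquiv B A :=
  ⟨e.1.symm, fun x y => e.1.injective <| by simp only [e.2, Equiv.apply_symm_apply]⟩

def trans (e : ShelfEquiv A B) (e' : ShelfEquiv B E) : ShelfEquiv A E :=
  ⟨e.1.trans e'.1, fun x y => by simp only [Equiv.trans_apply, e.2, e'.2]⟩

def toShelfHom (e : ShelfEquiv A B) : A →◃ B where
  toFun := e.1
  map_act' := e.2 _ _

def equivAut (e₀ : ShelfEquiv A B) : ShelfEquiv A B ≃ ShelfEquiv B B where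
  toFun φ := e₀.symm.trans φ
  invFun ψ := e₀.trans ψ
  left_inv φ := by ext x; exact congrArg φ.1 (e₀.1.symm_apply_apply x)
  right_inv ψ := by ext x; exact congrArg ψ.1 (e₀.1.apply_symm_apply x)

end ShelfEquiv

namespace ShelfHom

variable {C R : Type*} [Rack C] [Rack R]

def rangeVal (f : C →◃ R) : Set.range f →◃ R where
  toFun := Subtype.val
  map_act' := rfl

def rangeFactorization (f : C →◃ R) : C →◃ Set.range f where
  toFun := Set.rangeFactorization f
  map_act' := Subtype.ext f.map_act

end ShelfHom

abbrev MorD (C R D : Type*) [Rack C] [Rack R] [Shelf D] : Type _ :=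
  {f : C →◃ R // RackIsomorphic (Set.range f) D}

abbrev InjSurPair (C D R : Type*) [Shelf C] [Shelf D] [Shelf R] : Type _ :=
  {i : D →◃ R // Function.Injective i} × {s : C →◃ D // Function.Surjective s}

def InjSurPair.comp {C D R : Type*} [Shelf C] [Shelf D] [Shelf R] (p : InjSurPair C D R) :
    C →◃ R :=
  p.1.1.comp p.2.1

section Factorization

variable {C R D : Type*} [Rack C] [Rack R] [Shelf D]

noncomputable def rangeEquivOfComp {i : D →◃ R} (hi : Function.Injective i) {s : C →◃ D}
    (hs : Function.Surjective s) {f : C →◃ R} (h : i.comp s = f) : ShelfEquiv D (Set.range f) :=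
  ⟨Equiv.ofBijective
      (fun d => ⟨i d, by obtain ⟨c, rfl⟩ := hs d; exact ⟨c, (DFunLike.congr_fun h c).symm⟩⟩)
      ⟨fun _ _ hde => hi (congrArg Subtype.val hde),
        by rintro ⟨_, c, rfl⟩; exact ⟨s c, Subtype.ext (DFunLike.congr_fun h c)⟩⟩,
    fun _ _ => Subtype.ext i.map_act⟩

noncomputable def factorizationEquiv (f : C →◃ R) :
    {p : InjSurPair C D R // p.comp = f} ≃ ShelfEquiv (Set.range f) D where
  toFun p := (rangeEquivOfComp p.1.1.2 p.1.2.2 p.2).symm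
  invFun φ :=
    ⟨(⟨(ShelfHom.rangeVal f).comp φ.symm.toShelfHom,
        Subtype.val_injective.comp φ.1.symm.injective⟩,
      ⟨φ.toShelfHom.comp (ShelfHom.rangeFactorization f),
        φ.1.surjective.comp Set.rangeFactorization_surjective⟩),
      by ext c; exact congrArg Subtype.val (φ.1.symm_apply_apply _)⟩
  left_inv := by
    rintro ⟨⟨⟨i, hi⟩, ⟨s, hs⟩⟩, rfl⟩
    refine Subtype.ext (Prod.ext (Subtype.ext ?_) (Subtype.ext ?_)) <;> ext x
    · rfl
    · exact (Equiv.symm_apply_eq _).mpr rfl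
  right_inv φ := by
    ext x
    exact (Equiv.symm_apply_eq _).mpr
      (Subtype.ext (congrArg Subtype.val (φ.1.symm_apply_apply x).symm))

end Factorization

theorem morD_count_eq_inj_mul_sur_general {C R D : Type u} [Rack C] [Rack R] [Rack D] :
    Nat.card {f : C →◃ R // @RackIsomorphic (Set.range ⇑f) D (rangeShelf f) Rack.toShelf} *
      Nat.card {g : Equiv.Perm D // ∀ x y : D, g (x ◃ y) = g x ◃ g y} =
    Nat.card {h : D →◃ R // Function.Injective ⇑h} *
      Nat.card {k : C →◃ D // Function.Surjective ⇑k} := by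
  rw [← Nat.card_prod, ← Nat.card_prod]
  refine Nat.card_congr ?_
  calc MorD C R D × ShelfEquiv D D
      ≃ Σ _ : MorD C R D, ShelfEquiv D D := (Equiv.sigmaEquivProd _ _).symm
    _ ≃ Σ f : MorD C R D, ShelfEquiv (Set.range f.1) D :=
        Equiv.sigmaCongrRight fun f =>
          (rackIsomorphic_iff_nonempty_shelfEquiv.mp f.2).some.equivAut.symm
    _ ≃ Σ f : MorD C R D, {p : InjSurPair C D R // p.comp = f.1} :=
        Equiv.sigmaCongrRight fun f => (factorizationEquiv f.1).symm
    _ ≃ InjSurPair C D R :=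
        Equiv.sigmaSubtypeFiberEquiv InjSurPair.comp _ fun p =>
          rackIsomorphic_iff_nonempty_shelfEquiv.mpr ⟨(rangeEquivOfComp p.1.2 p.2.2 rfl).symm⟩

/-- `|Mor^D(C, R)| ⬝ |Aut(D)| = |Inj(D, R)| ⬝ |Sur(C, D)|` for finite racks
`C`, `R`, `D`, where `Mor^D(C, R)` is the set of morphisms `C → R` with image isomorphic
to `D`. -/
theorem morD_count_eq_inj_mul_sur {C R D : Type u} [Rack C] [Rack R] [Rack D]
    [Fintype C] [Fintype R] [Fintype D] :
    Nat.card {f : C →◃ R // @RackIsomorphic (Set.range ⇑f) D (rangeShelf f) Rack.toShelf} *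
      Nat.card {g : Equiv.Perm D // ∀ x y : D, g (x ◃ y) = g x ◃ g y} =
    Nat.card {h : D →◃ R // Function.Injective ⇑h} *
      Nat.card {k : C →◃ D // Function.Surjective ⇑k} :=
  morD_count_eq_inj_mul_sur_general
end

section
/- If C and D are finite connected racks such that for every finite connected rack E the number of rack morphisms E → C equals the number of rack morphisms E → D, then C and D are isomorphic as racks. -/
open Quandles

/-!
Lovász's counting argument. Sorting morphisms `E → X` by their kernel congruence gives
`|Hom(E, X)| = ∑_c |Inj(E/c, X)|` over all congruences `c` of `E`, where the trivial congruence
contributes `|Inj(E, X)|`. Quotients of a connected rack are connected and proper ones are smaller,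
so strong induction on `|E|` turns equal counts of morphisms from finite connected racks into
equal counts of injective ones. Since `C` and `D` are themselves finite and connected, the
identities of `C` and `D` yield injections `C → D` and `D → C`, and the first is then a bijection.
-/

open Function

namespace ShelfHom

variable {R S : Type*} [Rack R] [Rack S]

theorem map_invAct_s14 (f : R →◃ S) (x y : R) : f (x ◃⁻¹ y) = f x ◃⁻¹ f y := by
  rw [← Rack.left_cancel (f x), Rack.right_inv, ← map_act, Rack.right_inv]

instance [Finite R] [Finite S] : Finite (R →◃ S) :=
  Finite.of_injective _ DFunLike.coe_injective

end ShelfHom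

section Connected

variable {R S : Type*} [Rack R] [Rack S]

theorem exists_mem_inn_semiconj (f : R →◃ S) {g : Equiv.Perm R} (hg : g ∈ Inn R) :
    ∃ h ∈ Inn S, Semiconj f g h := by
  induction hg using Subgroup.closure_induction with
  | mem _ hx =>
    obtain ⟨a, rfl⟩ := hx
    exact ⟨Rack.act' (f a), Subgroup.subset_closure ⟨f a, rfl⟩, fun _ => f.map_act⟩
  | one => exact ⟨1, one_mem _, fun _ => rfl⟩
  | mul _ _ _ _ ih₁ ih₂ =>
    obtain ⟨h₁, hh₁, e₁⟩ := ih₁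
    obtain ⟨h₂, hh₂, e₂⟩ := ih₂
    exact ⟨h₁ * h₂, mul_mem hh₁ hh₂, e₁.comp_right e₂⟩
  | inv g _ ih =>
    obtain ⟨h, hh, e⟩ := ih
    exact ⟨h⁻¹, inv_mem hh, e.inverses_right g.right_inv h.left_inv⟩

theorem IsConnectedRack.of_surjective {f : R →◃ S} (hf : Surjective f)
    (hR : IsConnectedRack R) : IsConnectedRack S := by
  obtain ⟨⟨r⟩, htrans⟩ := hR
  refine ⟨⟨f r⟩, fun s t => ?_⟩
  obtain ⟨x, rfl⟩ := hf s
  obtain ⟨y, rfl⟩ := hf t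
  obtain ⟨g, hg, rfl⟩ := htrans x y
  obtain ⟨h, hh, e⟩ := exists_mem_inn_semiconj f hg
  exact ⟨h, hh, (e x).symm⟩

end Connected

@[ext]
structure RackCon (R : Type*) [Rack R] extends Setoid R where
  act_compat : ∀ {a b c d : R}, r a b → r c d → r (a ◃ c) (b ◃ d)
  invAct_compat : ∀ {a b c d : R}, r a b → r c d → r (a ◃⁻¹ c) (b ◃⁻¹ d)

namespace RackCon

variable {R S : Type*} [Rack R] [Rack S]

instance : Bot (RackCon R) where
  bot :=
    { r := Eq
      iseqv := eq_equivalence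
      act_compat := by rintro _ _ _ _ rfl rfl; rfl
      invAct_compat := by rintro _ _ _ _ rfl rfl; rfl }

def ker (f : R →◃ S) : RackCon R where
  toSetoid := Setoid.ker f
  act_compat h h' := by
    simp only [Setoid.ker_def, ShelfHom.map_act] at *
    rw [h, h']
  invAct_compat h h' := by
    simp only [Setoid.ker_def, ShelfHom.map_invAct_s14] at *
    rw [h, h']

theorem ker_eq_bot_iff {f : R →◃ S} : ker f = ⊥ ↔ Injective f := by
  refine ⟨fun h a b hab => ?_, fun h => ?_⟩
  · change (ker f).r a b at hab
    rwa [h] at hab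
  · ext a b
    exact ⟨fun hab => h hab, congrArg f⟩

protected def Quotient (c : RackCon R) : Type _ := _root_.Quotient c.toSetoid

instance (c : RackCon R) : Rack c.Quotient where
  act := Quotient.map₂ (· ◃ ·) fun _ _ h _ _ h' => c.act_compat h h'
  invAct := Quotient.map₂ (· ◃⁻¹ ·) fun _ _ h _ _ h' => c.invAct_compat h h'
  self_distrib := by
    rintro ⟨x⟩ ⟨y⟩ ⟨z⟩
    exact congrArg (Quotient.mk _) Shelf.self_distrib
  left_inv := by
    rintro ⟨x⟩ ⟨y⟩
    exact congrArg (Quotient.mk _) (Rack.left_inv x y)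
  right_inv := by
    rintro ⟨x⟩ ⟨y⟩
    exact congrArg (Quotient.mk _) (Rack.right_inv x y)

instance (c : RackCon R) [Finite R] : Finite c.Quotient :=
  Quotient.finite c.toSetoid

def proj (c : RackCon R) : R →◃ c.Quotient where
  toFun := Quotient.mk c.toSetoid
  map_act' := rfl

theorem proj_surjective (c : RackCon R) : Surjective c.proj :=
  Quotient.mk_surjective

theorem ker_proj (c : RackCon R) : ker c.proj = c := by
  ext a b
  exact Quotient.eq

def lift (c : RackCon R) (f : R →◃ S) (hf : ∀ a b, c.r a b → f a = f b) : c.Quotient →◃ S where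
  toFun := Quotient.lift f hf
  map_act' := by
    rintro ⟨x⟩ ⟨y⟩
    exact f.map_act

instance [Finite R] : Finite (RackCon R) :=
  Finite.of_injective (fun c : RackCon R => ⇑c.toSetoid) fun _ _ => RackCon.ext

def kerFiberEquiv (c : RackCon R) :
    {f : R →◃ S // ker f = c} ≃ {g : c.Quotient →◃ S // Injective g} where
  toFun f := ⟨c.lift f fun a b hab => by rw [← f.2] at hab; exact hab, by
    rintro ⟨a⟩ ⟨b⟩ hab
    change (ker f.1).r a b at hab
    rw [f.2] at hab
    exact Quotient.sound hab⟩
  invFun g := ⟨g.1.comp c.proj, by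
    ext a b
    exact g.2.eq_iff.trans Quotient.eq⟩
  left_inv f := rfl
  right_inv g := Subtype.ext (DFunLike.ext _ _ (by rintro ⟨a⟩; rfl))

theorem card_quotient_lt [Finite R] {c : RackCon R} (hc : c ≠ ⊥) :
    Nat.card c.Quotient < Nat.card R := by
  by_contra! hle
  exact hc (c.ker_proj ▸ ker_eq_bot_iff.2 (c.proj_surjective.bijective_of_nat_card_le hle).1)

theorem card_shelfHom_eq_card_sigma :
    Nat.card (R →◃ S) = Nat.card (Σ c : RackCon R, {g : c.Quotient →◃ S // Injective g}) :=
  Nat.card_congr ((Equiv.sigmaFiberEquiv ker).symm.trans (Equiv.sigmaCongrRight kerFiberEquiv))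

theorem card_injective_quotient_bot :
    Nat.card {g : (⊥ : RackCon R).Quotient →◃ S // Injective g} =
      Nat.card {f : R →◃ S // Injective f} :=
  Nat.card_congr ((kerFiberEquiv ⊥).symm.trans (Equiv.subtypeEquivRight fun _ => ker_eq_bot_iff))

end RackCon

universe u

section Marks

variable {X Y : Type u} [Rack X] [Rack Y] [Finite X] [Finite Y]

theorem card_injective_eq_of_card_shelfHom_eq
    (h : ∀ (E : Type u) [Rack E] [Fintype E], IsConnectedRack E →
      Nat.card (E →◃ X) = Nat.card (E →◃ Y))
    (E : Type u) [Rack E] [Finite E] (hE : IsConnectedRack E) :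
    Nat.card {f : E →◃ X // Injective f} = Nat.card {f : E →◃ Y // Injective f} := by
  classical
  induction hn : Nat.card E using Nat.strong_induction_on generalizing E with
  | _ n ih =>
    have := Fintype.ofFinite E
    have := Fintype.ofFinite (RackCon E)
    have hproper : ∀ c ∈ ({⊥}ᶜ : Finset (RackCon E)),
        Nat.card {g : c.Quotient →◃ X // Injective g} =
          Nat.card {g : c.Quotient →◃ Y // Injective g} := fun c hc =>
      ih _ (hn ▸ RackCon.card_quotient_lt (by simpa using hc)) c.Quotient
        (hE.of_surjective c.proj_surjective) rfl
    have hhom := h E hE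
    rw [RackCon.card_shelfHom_eq_card_sigma, RackCon.card_shelfHom_eq_card_sigma, Nat.card_sigma,
      Nat.card_sigma, Fintype.sum_eq_add_sum_compl ⊥, Fintype.sum_eq_add_sum_compl ⊥,
      Finset.sum_congr rfl hproper, RackCon.card_injective_quotient_bot,
      RackCon.card_injective_quotient_bot] at hhom
    exact Nat.add_right_cancel hhom

theorem exists_injective_of_card_shelfHom_eq
    (h : ∀ (E : Type u) [Rack E] [Fintype E], IsConnectedRack E →
      Nat.card (E →◃ X) = Nat.card (E →◃ Y))
    (hX : IsConnectedRack X) : ∃ f : X →◃ Y, Injective f := by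
  have : Nonempty {f : X →◃ X // Injective f} := ⟨⟨ShelfHom.id X, injective_id⟩⟩
  have hpos : 0 < Nat.card {f : X →◃ X // Injective f} := Nat.card_pos
  rw [card_injective_eq_of_card_shelfHom_eq h X hX] at hpos
  obtain ⟨f, hf⟩ := (Nat.card_pos_iff.1 hpos).1.some
  exact ⟨f, hf⟩

end Marks

/-- If `C` and `D` are finite connected racks that receive the same number of
rack morphisms from every finite connected rack `E`, then `C ≅ D`. -/
theorem equal_marks_implies_isomorphic {C D : Type u} [Rack C] [Rack D]
    [Fintype C] [Fintype D]
    (hC : IsConnectedRack C) (hD : IsConnectedRack D)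
    (h : ∀ (E : Type u) [Rack E] [Fintype E], IsConnectedRack E →
      Nat.card (E →◃ C) = Nat.card (E →◃ D)) :
    RackIsomorphic C D := by
  obtain ⟨f, hf⟩ := exists_injective_of_card_shelfHom_eq h hC
  obtain ⟨g, hg⟩ := exists_injective_of_card_shelfHom_eq (fun E _ _ hE => (h E hE).symm) hD
  have hbij := hf.bijective_of_nat_card_le (Nat.card_le_card_of_injective g hg)
  exact ⟨Equiv.ofBijective f hbij, fun _ _ => f.map_act⟩
end
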